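/- Density-invariance of the coverage expression: with the substitution t = πλ_B x², the integrand Z(x) f(x) [L(x)]^{K-1} of Theorem 1, where Z(x) = exp(−ηTn(A x^{α(1−ε)} + B x^{2α(1−ε)})/M) with A, B proportional to (πλ_B)^{−α(1−ε)/2} and (πλ_B)^{−α(1−ε)} respectively (via P_ω I_ω with D = c/√λ_B), becomes a function of t alone, independent of λ_B. -/

import Mathlib

open Real

/-!
Every factor of `P_ω(λ) I_ω(λ) x^{ωα(1-ε)}` at `x = √(t/(πλ))` is a power of `λ` times a
`λ`-free quantity: `(λπ)^{-αεω/2}`, `λ`, `(c/√λ)^{2-ωα}` and `(√(t/π)/√λ)^{ωα(1-ε)}` contribute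
the exponents `-αεω/2`, `1`, `(ωα-2)/2` and `-ωα(1-ε)/2`, which sum to zero.
-/

theorem Real.div_sqrt_rpow {x lam : ℝ} (hx : 0 ≤ x) (hlam : 0 < lam) (s : ℝ) :
    (x / √lam) ^ s = x ^ s * lam ^ (-(s / 2)) := by
  rw [div_rpow hx (sqrt_nonneg lam), sqrt_eq_rpow, ← rpow_mul hlam.le, rpow_neg hlam.le,
    div_eq_mul_inv, one_div_mul_eq_div]

theorem coverage_term_eq_density_free {α ε c lam : ℝ} (ω t : ℝ) (hc : 0 < c) (hlam : 0 < lam) :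
    (lam * π) ^ (-(α * ε * ω) / 2) * Gamma (α * ε * ω / 2 + 1)
        * (2 * π * lam / (ω * α - 2) * (c / √lam) ^ (2 - ω * α))
        * √(t / (π * lam)) ^ (ω * α * (1 - ε))
      = π ^ (-(α * ε * ω) / 2) * Gamma (α * ε * ω / 2 + 1)
        * (2 * π / (ω * α - 2) * c ^ (2 - ω * α)) * √(t / π) ^ (ω * α * (1 - ε)) := by
  have hsqrt : √(t / (π * lam)) = √(t / π) / √lam := by
    rw [← div_div, sqrt_div' _ hlam.le]
  have hexponents : lam ^ (-(α * ε * ω) / 2) * lam * lam ^ (-((2 - ω * α) / 2))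
      * lam ^ (-(ω * α * (1 - ε) / 2)) = 1 := by
    rw [← rpow_add_one hlam.ne', ← rpow_add hlam, ← rpow_add hlam]
    convert rpow_zero lam using 2
    ring
  rw [mul_rpow hlam.le pi_pos.le, div_sqrt_rpow hc.le hlam, hsqrt,
    div_sqrt_rpow (sqrt_nonneg _) hlam]
  calc _ = π ^ (-(α * ε * ω) / 2) * Gamma (α * ε * ω / 2 + 1)
        * (2 * π / (ω * α - 2) * c ^ (2 - ω * α)) * √(t / π) ^ (ω * α * (1 - ε))
        * (lam ^ (-(α * ε * ω) / 2) * lam * lam ^ (-((2 - ω * α) / 2))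
          * lam ^ (-(ω * α * (1 - ε) / 2))) := by ring
    _ = _ := by rw [hexponents, mul_one]

theorem coverage_density_invariance_general (ω : ℝ) (α ε c : ℝ)
    (hc : 0 < c)
    (P I : ℝ → ℝ)
    (hP : ∀ lam, P lam = (lam * π) ^ (-(α * ε * ω) / 2) * Real.Gamma (α * ε * ω / 2 + 1))
    (hI : ∀ lam, I lam = 2 * π * lam / (ω * α - 2) * (c / Real.sqrt lam) ^ (2 - ω * α))
    (lam₁ lam₂ t : ℝ) (h₁ : 0 < lam₁) (h₂ : 0 < lam₂) :
    P lam₁ * I lam₁ * (Real.sqrt (t / (π * lam₁))) ^ (ω * α * (1 - ε))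
      = P lam₂ * I lam₂ * (Real.sqrt (t / (π * lam₂))) ^ (ω * α * (1 - ε)) := by
  rw [hP, hP, hI, hI, coverage_term_eq_density_free ω t hc h₁,
    coverage_term_eq_density_free ω t hc h₂]

/-- Density-invariance of the coverage expression: with `P_ω(λ) = (λπ)^{-αεω/2} Γ(αεω/2+1)`,
`I_ω(λ) = (2πλ/(ωα-2)) D^{2-ωα}` for guard radius `D = c/√λ` (so `D` scales as `λ^{-1/2}`),
the product `P_ω(λ) I_ω(λ) x^{ωα(1-ε)}` expressed at `x = √(t/(πλ))` depends on `λ` only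
through `t`, i.e. it is the same for any two densities `λ₁, λ₂ > 0`. Hence the coverage
probability of Theorem 1 does not depend on the BS density. -/
theorem coverage_density_invariance (ω : ℝ) (hω : ω = 1 ∨ ω = 2) (α ε c : ℝ)
    (hα : 2 < α) (hε₀ : 0 ≤ ε) (hε₁ : ε ≤ 1) (hωα : 2 < ω * α) (hc : 0 < c)
    (P I : ℝ → ℝ)
    (hP : ∀ lam, P lam = (lam * π) ^ (-(α * ε * ω) / 2) * Real.Gamma (α * ε * ω / 2 + 1))
    (hI : ∀ lam, I lam = 2 * π * lam / (ω * α - 2) * (c / Real.sqrt lam) ^ (2 - ω * α))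
    (lam₁ lam₂ t : ℝ) (h₁ : 0 < lam₁) (h₂ : 0 < lam₂) (ht : 0 < t) :
    P lam₁ * I lam₁ * (Real.sqrt (t / (π * lam₁))) ^ (ω * α * (1 - ε))
      = P lam₂ * I lam₂ * (Real.sqrt (t / (π * lam₂))) ^ (ω * α * (1 - ε)) :=
  coverage_density_invariance_general ω α ε c hc P I hP hI lam₁ lam₂ t h₁ h₂
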